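/- arXiv:1403.6268 — 3 statements merged into one kernel-verified Lean document; each statement's English description precedes it below -/
import Mathlib

section
/- Let N be a real p×p matrix, H a real p×r matrix, and b, x ∈ ℝ^p. If N ⬝ x = b, Hᵀ ⬝ x = 0, and the matrix NᵀN + HHᵀ is invertible, then x = (NᵀN + HHᵀ)⁻¹ ⬝ Nᵀ ⬝ b. (This is the general influence-function formula of Theorem 1 for the restricted minimum divergence estimator, reduced to its linear-algebraic core.) -/
open Matrix

/-- Theorem 1 (linear-algebraic core): if `N ⬝ x = b`, `Hᵀ ⬝ x = 0`, and
`NᵀN + HHᵀ` is invertible, then `x = (NᵀN + HHᵀ)⁻¹ ⬝ Nᵀ ⬝ b`. -/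
theorem stmt_0 {p r : ℕ} (N : Matrix (Fin p) (Fin p) ℝ) (H : Matrix (Fin p) (Fin r) ℝ)
    (b x : Fin p → ℝ)
    (hN : N.mulVec x = b) (hH : Hᵀ.mulVec x = 0)
    (hinv : IsUnit (Nᵀ * N + H * Hᵀ)) :
    x = (Nᵀ * N + H * Hᵀ)⁻¹.mulVec (Nᵀ.mulVec b) := by
  have key : (Nᵀ * N + H * Hᵀ).mulVec x = Nᵀ.mulVec b := by
    rw [add_mulVec, ← mulVec_mulVec, ← mulVec_mulVec, hN, hH, mulVec_zero, add_zero]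
  calc x = (1 : Matrix (Fin p) (Fin p) ℝ).mulVec x := by rw [one_mulVec]
    _ = ((Nᵀ * N + H * Hᵀ)⁻¹ * (Nᵀ * N + H * Hᵀ)).mulVec x := by
        rw [nonsing_inv_mul _ ((isUnit_nonsing_inv_det_iff).mp
          ((isUnit_nonsing_inv_det_iff).mpr ((isUnit_iff_isUnit_det _).mp hinv)))]
    _ = (Nᵀ * N + H * Hᵀ)⁻¹.mulVec (Nᵀ.mulVec b) := by
        rw [← mulVec_mulVec, key]
end

section
/- Let φ : ℝ → ℝ be differentiable with φ' differentiable at δ := a/b − 1, where a ∈ ℝ and b > 0. Then the mixed second partial derivative of D(a,b) := φ(a/b − 1)·b, namely the derivative at a of the map s ↦ (d/dt)|_{t=b} [φ(s/t − 1)·t], equals −(δ + 1)·φ''(δ)/b, i.e., equals −A'(δ)/b where A(δ) := (δ + 1)·φ'(δ) − φ(δ). -/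
/-!
Differentiating `t ↦ φ(s/t − 1)·t` at `t = b` gives `φ(δ) − (δ + 1)φ'(δ) = −A(δ)` with
`δ = s/b − 1`, where `A` is the residual adjustment function. Since `s ↦ s/b − 1` has slope `1/b`,
the mixed partial is `−A'(δ)/b`, and `A'(δ) = (δ + 1)φ''(δ)` because the two `φ'(δ)` terms cancel.
-/

/-- The residual adjustment function `A` of the disparity generated by `φ`. -/
noncomputable def residualAdjustment (φ : ℝ → ℝ) (δ : ℝ) : ℝ :=
  (δ + 1) * deriv φ δ - φ δ

theorem hasDerivAt_residualAdjustment {φ : ℝ → ℝ} {δ : ℝ} (hφ : DifferentiableAt ℝ φ δ)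
    (hφ' : DifferentiableAt ℝ (deriv φ) δ) :
    HasDerivAt (residualAdjustment φ) ((δ + 1) * deriv (deriv φ) δ) δ :=
  ((((hasDerivAt_id' δ).add_const 1).fun_mul hφ'.hasDerivAt).fun_sub hφ.hasDerivAt).congr_deriv
    (by ring)

theorem hasDerivAt_disparity_integrand {φ : ℝ → ℝ} {s b : ℝ} (hb : b ≠ 0)
    (hφ : DifferentiableAt ℝ φ (s / b - 1)) :
    HasDerivAt (fun t => φ (s / t - 1) * t) (-residualAdjustment φ (s / b - 1)) b := by
  have hinner : HasDerivAt (fun t => s / t - 1) (-(s / b ^ 2)) b :=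
    (((hasDerivAt_const b s).fun_div (hasDerivAt_id' b) hb).sub_const 1).congr_deriv
      (by ring)
  refine ((hφ.hasDerivAt.comp b hinner).fun_mul (hasDerivAt_id' b)).congr_deriv ?_
  simp only [residualAdjustment, Function.comp_apply]
  field_simp
  ring

/-- The mixed second partial derivative of `D(a,b) = φ(a/b − 1)·b` equals
`−(δ+1)φ''(δ)/b = −A'(δ)/b` with `δ = a/b − 1`. -/
theorem stmt_11 (φ : ℝ → ℝ) (hφ : Differentiable ℝ φ) (a b : ℝ) (hb : 0 < b)
    (h2 : DifferentiableAt ℝ (deriv φ) (a / b - 1)) :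
    deriv (fun s => deriv (fun t => φ (s / t - 1) * t) b) a
      = -((a / b - 1 + 1) * deriv (deriv φ) (a / b - 1)) / b := by
  have hpartial : (fun s => deriv (fun t => φ (s / t - 1) * t) b)
      = fun s => -residualAdjustment φ (s / b - 1) := by
    funext s
    exact (hasDerivAt_disparity_integrand hb.ne' (hφ _)).deriv
  have hδ : HasDerivAt (fun s : ℝ => s / b - 1) (1 / b) a := by
    simpa using ((hasDerivAt_id a).div_const b).sub_const 1
  rw [hpartial]
  refine ((hasDerivAt_residualAdjustment (hφ _) h2).comp a hδ).fun_neg.deriv.trans ?_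
  ring
end

section
/- Let a > 0 and b > 0. Then the limit as α → 0⁺ of b^{1+α} − ((1+α)/α)·b^α·a + (1/α)·a^{1+α} equals a·log(a/b) + b − a; i.e., the function α ↦ b^{1+α} − ((1+α)/α) b^α a + (1/α) a^{1+α} tends to a·log(a/b) + b − a along the filter of positive reals approaching 0. -/
open Real Filter

lemma aux_slope {c : ℝ} (hc : 0 < c) :
    Tendsto (fun α : ℝ => (c ^ α - 1) / α) (nhdsWithin 0 (Set.Ioi 0)) (nhds (Real.log c)) := by
  have h := (hasStrictDerivAt_const_rpow hc 0).hasDerivAt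
  rw [hasDerivAt_iff_tendsto_slope] at h
  have h' := h.mono_left (nhdsWithin_mono 0 (fun x hx => Set.mem_of_mem_of_subset hx
    (by intro x hx; exact ne_of_gt hx : Set.Ioi (0:ℝ) ⊆ {(0:ℝ)}ᶜ)))
  simp only [Real.rpow_zero, one_mul] at h'
  refine h'.congr (fun α => ?_)
  simp [slope_def_field, div_eq_inv_mul]

lemma aux_base {c : ℝ} (hc : 0 < c) :
    Tendsto (fun α : ℝ => c ^ α) (nhdsWithin 0 (Set.Ioi 0)) (nhds 1) := by
  have : ContinuousAt (fun α : ℝ => c ^ α) 0 := continuousAt_const_rpow hc.ne'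
  simpa using (this.tendsto.mono_left nhdsWithin_le_nhds)

/-- As `α → 0⁺`, the density power divergence integrand tends to the Kullback–Leibler
integrand `a log(a/b) + b − a`. -/
theorem stmt_16 (a b : ℝ) (ha : 0 < a) (hb : 0 < b) :
    Filter.Tendsto
      (fun α : ℝ => b ^ (1 + α) - ((1 + α) / α) * b ^ α * a + (1 / α) * a ^ (1 + α))
      (nhdsWithin 0 (Set.Ioi 0))
      (nhds (a * Real.log (a / b) + b - a)) := by
  have key : Tendsto (fun α : ℝ =>
      b * b ^ α - a * b ^ α + a * ((a ^ α - 1) / α - (b ^ α - 1) / α))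
      (nhdsWithin 0 (Set.Ioi 0))
      (nhds (b * 1 - a * 1 + a * (Real.log a - Real.log b))) := by
    exact (((aux_base hb).const_mul b).sub ((aux_base hb).const_mul a)).add
      (((aux_slope ha).sub (aux_slope hb)).const_mul a)
  have heq : b * 1 - a * 1 + a * (Real.log a - Real.log b)
      = a * Real.log (a / b) + b - a := by
    rw [Real.log_div ha.ne' hb.ne']; ring
  rw [heq] at key
  refine key.congr' ?_
  filter_upwards [self_mem_nhdsWithin] with α (hα : 0 < α)
  have h1 : b ^ (1 + α) = b * b ^ α := by
    rw [Real.rpow_add hb, Real.rpow_one]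
  have h2 : a ^ (1 + α) = a * a ^ α := by
    rw [Real.rpow_add ha, Real.rpow_one]
  rw [h1, h2]
  field_simp
  ring
end
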